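/- arXiv:2112.09116 — 2 statements merged into one kernel-verified Lean document; each statement's English description precedes it below -/
import Mathlib

section
/- Let φ = ξ + ψ be a decomposition of a Gaussian field on Z^d where ψ is independent of a σ-algebra F and ξ is F-measurable, and let φ̃ = ψ + ξ̃ with ξ̃ an independent copy of ξ. Let K ⊂ Z^d, ε > 0, H_ε = {sup_{x∈K} |ξ_x| ≤ ε/2}, and H̃_ε defined analogously with ξ̃. If f : R^{Z^d} → [0,1] is increasing and supported on K, then on the event H_ε, (E[f(φ − ε)] − P[H_ε^c]) · 1_{H_ε} ≤ E[f(φ) | F] · 1_{H_ε} ≤ (E[f(φ + ε)] + P[H_ε^c]) · 1_{H_ε}. -/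
open MeasureTheory

lemma aux_indep_setIntegral {Ω β : Type*} [m0 : MeasurableSpace Ω] [MeasurableSpace β]
    (μ : Measure Ω) (ψ : Ω → β) (hψ : Measurable ψ) (A : Set Ω)
    (hAind : ∀ s : Set β, MeasurableSet s → μ (ψ ⁻¹' s ∩ A) = μ (ψ ⁻¹' s) * μ A)
    (h : β → ℝ) (hh : Measurable h) :
    ∫ ω in A, h (ψ ω) ∂μ = (μ A).toReal * ∫ ω, h (ψ ω) ∂μ := by
  have hmap : (μ.restrict A).map ψ = (μ A) • μ.map ψ := by
    ext s hs
    rw [Measure.map_apply hψ hs, Measure.restrict_apply (hψ hs),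
      Measure.smul_apply, Measure.map_apply hψ hs, smul_eq_mul, mul_comm]
    exact hAind s hs
  calc ∫ ω in A, h (ψ ω) ∂μ = ∫ y, h y ∂((μ.restrict A).map ψ) :=
        (integral_map hψ.aemeasurable hh.aestronglyMeasurable).symm
    _ = (μ A).toReal * ∫ y, h y ∂(μ.map ψ) := by
        rw [hmap, integral_smul_measure, smul_eq_mul]
    _ = (μ A).toReal * ∫ ω, h (ψ ω) ∂μ := by
        rw [integral_map hψ.aemeasurable hh.aestronglyMeasurable]

/-- Conditional decoupling lemma: if `φ = ξ + ψ` with `ψ` independent of the σ-algebra `F`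
and `ξ` `F`-measurable, `H_ε = {sup_{x∈K} |ξ_x| ≤ ε/2}`, and `f : ℝ^{ℤ^d} → [0,1]` is
increasing and supported on `K`, then almost surely on `H_ε`,
`E[f(φ−ε)] − P[H_ε^c] ≤ E[f(φ) | F] ≤ E[f(φ+ε)] + P[H_ε^c]`. -/
theorem conditional_decoupling {Ω : Type*} (F : MeasurableSpace Ω) [m0 : MeasurableSpace Ω]
    (μ : Measure Ω) [IsProbabilityMeasure μ] {d : ℕ}
    (hF : F ≤ m0)
    (ξ ψ : Ω → (Fin d → ℤ) → ℝ)
    (hξmeas : Measurable[F] ξ) (hψmeas : Measurable ψ)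
    (hindep : ∀ s : Set ((Fin d → ℤ) → ℝ), MeasurableSet s →
      ∀ t : Set Ω, MeasurableSet[F] t → μ (ψ ⁻¹' s ∩ t) = μ (ψ ⁻¹' s) * μ t)
    (K : Set (Fin d → ℤ)) (ε : ℝ) (hε : 0 < ε)
    (f : ((Fin d → ℤ) → ℝ) → ℝ) (hfmeas : Measurable f)
    (hf01 : ∀ a, f a ∈ Set.Icc (0 : ℝ) 1)
    (hfmono : ∀ a b : (Fin d → ℤ) → ℝ, (∀ x, a x ≤ b x) → f a ≤ f b)
    (hfsupp : ∀ a b : (Fin d → ℤ) → ℝ, (∀ x ∈ K, a x = b x) → f a = f b)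
    (φ : Ω → (Fin d → ℤ) → ℝ) (hφ : ∀ ω x, φ ω x = ξ ω x + ψ ω x)
    (Hε : Set Ω) (hHε : Hε = {ω | ∀ x ∈ K, |ξ ω x| ≤ ε / 2}) :
    ∀ᵐ ω ∂μ, ω ∈ Hε →
      ((∫ ω', f (fun x => φ ω' x - ε) ∂μ) - (μ Hεᶜ).toReal
          ≤ (μ[fun ω' => f (φ ω') | F]) ω ∧
        (μ[fun ω' => f (φ ω') | F]) ω
          ≤ (∫ ω', f (fun x => φ ω' x + ε) ∂μ) + (μ Hεᶜ).toReal) := by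
  classical
  have hξm0 : Measurable[m0] ξ := hξmeas.mono hF le_rfl
  have hψm0 : Measurable[m0] ψ := hψmeas
  have hφeq : φ = fun ω x => ξ ω x + ψ ω x := funext fun ω => funext (hφ ω)
  have hφmeas : Measurable[m0] φ := by
    rw [hφeq]
    exact @measurable_pi_lambda _ _ _ m0 _ _ fun x =>
      ((measurable_pi_apply x).comp hξm0).add ((measurable_pi_apply x).comp hψm0)
  -- measurability of Hε
  have hHεF : MeasurableSet[F] Hε := by
    rw [hHε]
    have : {ω | ∀ x ∈ K, |ξ ω x| ≤ ε / 2} = ⋂ x ∈ K, {ω | |ξ ω x| ≤ ε / 2} := by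
      ext ω; simp
    rw [this]
    refine MeasurableSet.biInter (Set.to_countable K) fun x _ => ?_
    exact measurableSet_le (continuous_abs.measurable.comp ((measurable_pi_apply x).comp hξmeas)) measurable_const
  have hleF : ∀ u v : Ω → ℝ, Measurable[F] u → Measurable[F] v →
      MeasurableSet[F] {ω | u ω ≤ v ω} := fun u v hu hv => measurableSet_le hu hv
  letI : MeasurableSpace Ω := m0
  have hHεm0 : MeasurableSet[m0] Hε := hF _ hHεF
  -- integrability of bounded measurable functions
  have hbd : ∀ g : Ω → ℝ, Measurable[m0] g → (∀ ω, g ω ∈ Set.Icc (0:ℝ) 1) → Integrable g μ := by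
    intro g hg hb
    refine (integrable_const (1:ℝ)).mono' hg.aestronglyMeasurable (ae_of_all _ fun ω => ?_)
    rw [Real.norm_eq_abs, abs_le]
    constructor <;> linarith [(hb ω).1, (hb ω).2]
  -- independence: set integral of functions of ψ
  have key : ∀ (A : Set Ω), MeasurableSet[F] A → ∀ h : ((Fin d → ℤ) → ℝ) → ℝ, Measurable h →
      ∫ ω in A, h (ψ ω) ∂μ = (μ A).toReal * ∫ ω, h (ψ ω) ∂μ := fun A hA h hh =>
    aux_indep_setIntegral μ ψ hψm0 A (fun s hs => hindep s hs A hA) h hh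
  -- abbreviations
  set g := μ[fun ω' => f (φ ω') | F] with hg
  have hfφmeas : Measurable[m0] fun ω => f (φ ω) := hfmeas.comp hφmeas
  have hfφint : Integrable (fun ω => f (φ ω)) μ := hbd _ hfφmeas fun ω => hf01 _
  have hψpmeas : Measurable fun b : (Fin d → ℤ) → ℝ => f (fun x => b x + ε/2) :=
    hfmeas.comp (measurable_pi_lambda _ fun x => (measurable_pi_apply x).add measurable_const)
  have hψmmeas : Measurable fun b : (Fin d → ℤ) → ℝ => f (fun x => b x - ε/2) :=
    hfmeas.comp (measurable_pi_lambda _ fun x => (measurable_pi_apply x).sub measurable_const)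
  have hφpmeas : Measurable[m0] fun ω => f (fun x => φ ω x + ε) :=
    hfmeas.comp (@measurable_pi_lambda _ _ _ m0 _ _ fun x =>
      ((measurable_pi_apply x).comp hφmeas).add measurable_const)
  have hφmmeas : Measurable[m0] fun ω => f (fun x => φ ω x - ε) :=
    hfmeas.comp (@measurable_pi_lambda _ _ _ m0 _ _ fun x =>
      ((measurable_pi_apply x).comp hφmeas).sub measurable_const)
  set cp : ℝ := (∫ ω', f (fun x => φ ω' x + ε) ∂μ) + (μ Hεᶜ).toReal with hcp
  set cm : ℝ := (∫ ω', f (fun x => φ ω' x - ε) ∂μ) - (μ Hεᶜ).toReal with hcm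
  -- pointwise comparisons on Hε
  have hptU : ∀ ω ∈ Hε, f (φ ω) ≤ f (fun x => ψ ω x + ε/2) := by
    intro ω hω
    have h1 : f (φ ω) = f (fun x => min (ξ ω x) (ε/2) + ψ ω x) := by
      refine hfsupp _ _ fun x hx => ?_
      rw [hφ ω x, min_eq_left]
      rw [hHε] at hω
      exact (abs_le.mp (hω x hx)).2
    rw [h1]
    exact hfmono _ _ fun x => by
      have := min_le_right (ξ ω x) (ε/2); linarith
  have hptU2 : ∀ ω ∈ Hε, f (fun x => ψ ω x + ε/2) ≤ f (fun x => φ ω x + ε) := by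
    intro ω hω
    have h1 : f (fun x => ψ ω x + ε/2) = f (fun x => min (ψ ω x + ε/2) (φ ω x + ε)) := by
      refine hfsupp _ _ fun x hx => ?_
      rw [min_eq_left]
      rw [hHε] at hω
      have := (abs_le.mp (hω x hx)).1
      rw [hφ ω x]; linarith
    rw [h1]
    exact hfmono _ _ fun x => min_le_right _ _
  have hptL : ∀ ω ∈ Hε, f (fun x => ψ ω x - ε/2) ≤ f (φ ω) := by
    intro ω hω
    have h1 : f (φ ω) = f (fun x => max (ξ ω x) (-(ε/2)) + ψ ω x) := by
      refine hfsupp _ _ fun x hx => ?_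
      rw [hφ ω x, max_eq_left]
      rw [hHε] at hω
      exact (abs_le.mp (hω x hx)).1
    rw [h1]
    exact hfmono _ _ fun x => by
      have := le_max_right (ξ ω x) (-(ε/2)); linarith
  have hptL2 : ∀ ω ∈ Hε, f (fun x => φ ω x - ε) ≤ f (fun x => ψ ω x - ε/2) := by
    intro ω hω
    have h1 : f (fun x => ψ ω x - ε/2) = f (fun x => max (ψ ω x - ε/2) (φ ω x - ε)) := by
      refine hfsupp _ _ fun x hx => ?_
      rw [max_eq_left]
      rw [hHε] at hω
      have := (abs_le.mp (hω x hx)).2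
      rw [hφ ω x]; linarith
    rw [h1]
    exact hfmono _ _ fun x => le_max_right _ _
  -- global comparison of the ψ-integrals with cp, cm
  have hEU : (∫ ω, f (fun x => ψ ω x + ε/2) ∂μ) ≤ cp := by
    have hintp : Integrable (fun ω => f (fun x => ψ ω x + ε/2)) μ :=
      hbd _ (hψpmeas.comp hψm0) fun ω => hf01 _
    have hintφp : Integrable (fun ω => f (fun x => φ ω x + ε)) μ :=
      hbd _ hφpmeas fun ω => hf01 _
    have hsplit := (integral_add_compl (μ := μ) hHεm0 hintp).symm
    have h1 : ∫ ω in Hε, f (fun x => ψ ω x + ε/2) ∂μ ≤ ∫ ω in Hε, f (fun x => φ ω x + ε) ∂μ :=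
      setIntegral_mono_on (μ := μ) hintp.integrableOn hintφp.integrableOn hHεm0 hptU2
    have h2 : ∫ ω in Hε, f (fun x => φ ω x + ε) ∂μ ≤ ∫ ω, f (fun x => φ ω x + ε) ∂μ :=
      setIntegral_le_integral (μ := μ) hintφp (ae_of_all _ fun ω => (hf01 _).1)
    have h3 : ∫ ω in Hεᶜ, f (fun x => ψ ω x + ε/2) ∂μ ≤ (μ Hεᶜ).toReal := by
      calc ∫ ω in Hεᶜ, f (fun x => ψ ω x + ε/2) ∂μ ≤ ∫ _ in Hεᶜ, (1:ℝ) ∂μ :=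
            setIntegral_mono_on (μ := μ) hintp.integrableOn (integrableOn_const
              (measure_ne_top _ _)) hHεm0.compl (fun ω _ => (hf01 _).2)
        _ = (μ Hεᶜ).toReal := by simp [Measure.real]
    rw [hcp, hsplit]
    linarith
  have hEL : cm ≤ ∫ ω, f (fun x => ψ ω x - ε/2) ∂μ := by
    have hintm : Integrable (fun ω => f (fun x => ψ ω x - ε/2)) μ :=
      hbd _ (hψmmeas.comp hψm0) fun ω => hf01 _
    have hintφm : Integrable (fun ω => f (fun x => φ ω x - ε)) μ :=
      hbd _ hφmmeas fun ω => hf01 _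
    have hsplit := (integral_add_compl (μ := μ) hHεm0 hintφm).symm
    have h1 : ∫ ω in Hε, f (fun x => φ ω x - ε) ∂μ ≤ ∫ ω in Hε, f (fun x => ψ ω x - ε/2) ∂μ :=
      setIntegral_mono_on (μ := μ) hintφm.integrableOn hintm.integrableOn hHεm0 hptL2
    have h2 : ∫ ω in Hε, f (fun x => ψ ω x - ε/2) ∂μ ≤ ∫ ω, f (fun x => ψ ω x - ε/2) ∂μ :=
      setIntegral_le_integral (μ := μ) hintm (ae_of_all _ fun ω => (hf01 _).1)
    have h3 : ∫ ω in Hεᶜ, f (fun x => φ ω x - ε) ∂μ ≤ (μ Hεᶜ).toReal := by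
      calc ∫ ω in Hεᶜ, f (fun x => φ ω x - ε) ∂μ ≤ ∫ _ in Hεᶜ, (1:ℝ) ∂μ :=
            setIntegral_mono_on (μ := μ) hintφm.integrableOn (integrableOn_const
              (measure_ne_top _ _)) hHεm0.compl (fun ω _ => (hf01 _).2)
        _ = (μ Hεᶜ).toReal := by simp [Measure.real]
    rw [hcm, hsplit]
    linarith
  -- set-integral bounds for F-measurable subsets of Hε
  have hsetU : ∀ A : Set Ω, MeasurableSet[F] A → A ⊆ Hε →
      ∫ ω in A, f (φ ω) ∂μ ≤ cp * (μ A).toReal := by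
    intro A hA hAH
    have hAm0 : MeasurableSet[m0] A := hF _ hA
    have hintp : Integrable (fun ω => f (fun x => ψ ω x + ε/2)) μ :=
      hbd _ (hψpmeas.comp hψm0) fun ω => hf01 _
    have h1 : ∫ ω in A, f (φ ω) ∂μ ≤ ∫ ω in A, f (fun x => ψ ω x + ε/2) ∂μ :=
      setIntegral_mono_on (μ := μ) hfφint.integrableOn hintp.integrableOn hAm0
        (fun ω hω => hptU ω (hAH hω))
    have h2 : ∫ ω in A, f (fun x => ψ ω x + ε/2) ∂μ
        = (μ A).toReal * ∫ ω, f (fun x => ψ ω x + ε/2) ∂μ := key A hA _ hψpmeas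
    have h3 : (μ A).toReal * (∫ ω, f (fun x => ψ ω x + ε/2) ∂μ) ≤ (μ A).toReal * cp :=
      mul_le_mul_of_nonneg_left hEU ENNReal.toReal_nonneg
    calc ∫ ω in A, f (φ ω) ∂μ ≤ (μ A).toReal * ∫ ω, f (fun x => ψ ω x + ε/2) ∂μ := by
          rw [← h2]; exact h1
      _ ≤ (μ A).toReal * cp := h3
      _ = cp * (μ A).toReal := mul_comm _ _
  have hsetL : ∀ A : Set Ω, MeasurableSet[F] A → A ⊆ Hε →
      cm * (μ A).toReal ≤ ∫ ω in A, f (φ ω) ∂μ := by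
    intro A hA hAH
    have hAm0 : MeasurableSet[m0] A := hF _ hA
    have hintm : Integrable (fun ω => f (fun x => ψ ω x - ε/2)) μ :=
      hbd _ (hψmmeas.comp hψm0) fun ω => hf01 _
    have h1 : ∫ ω in A, f (fun x => ψ ω x - ε/2) ∂μ ≤ ∫ ω in A, f (φ ω) ∂μ :=
      setIntegral_mono_on (μ := μ) hintm.integrableOn hfφint.integrableOn hAm0
        (fun ω hω => hptL ω (hAH hω))
    have h2 : ∫ ω in A, f (fun x => ψ ω x - ε/2) ∂μ
        = (μ A).toReal * ∫ ω, f (fun x => ψ ω x - ε/2) ∂μ := key A hA _ hψmmeas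
    calc cm * (μ A).toReal = (μ A).toReal * cm := mul_comm _ _
      _ ≤ (μ A).toReal * ∫ ω, f (fun x => ψ ω x - ε/2) ∂μ :=
          mul_le_mul_of_nonneg_left hEL ENNReal.toReal_nonneg
      _ = ∫ ω in A, f (fun x => ψ ω x - ε/2) ∂μ := h2.symm
      _ ≤ ∫ ω in A, f (φ ω) ∂μ := h1
  -- conditional expectation properties
  have hgmeasF : Measurable[F] g := (stronglyMeasurable_condExp (m := F)).measurable
  -- the bad sets
  have hbadU : ∀ n : ℕ, μ (Hε ∩ {ω | cp + 1/(n+1 : ℝ) ≤ g ω}) = 0 := by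
    intro n
    set A := Hε ∩ {ω | cp + 1/(n+1 : ℝ) ≤ g ω} with hA
    have hAF : MeasurableSet[F] A :=
      hHεF.inter (hleF _ _ measurable_const hgmeasF)
    have hAm0 : MeasurableSet[m0] A := hF _ hAF
    have hsub : A ⊆ Hε := Set.inter_subset_left
    have hcond : ∫ ω in A, g ω ∂μ = ∫ ω in A, f (φ ω) ∂μ :=
      setIntegral_condExp hF hfφint hAF
    have hlow : (cp + 1/(n+1 : ℝ)) * (μ A).toReal ≤ ∫ ω in A, g ω ∂μ :=
      setIntegral_ge_of_const_le_real (μ := μ) hAm0 (measure_ne_top _ _)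
        (fun ω hω => hω.2) integrable_condExp.integrableOn
    have hup := hsetU A hAF hsub
    have hpos : (0:ℝ) < 1/(n+1 : ℝ) := by positivity
    have hμA : (μ A).toReal = 0 := by nlinarith [ENNReal.toReal_nonneg (a := μ A)]
    exact (ENNReal.toReal_eq_zero_iff _).mp hμA |>.resolve_right (measure_ne_top _ _)
  have hbadL : ∀ n : ℕ, μ (Hε ∩ {ω | g ω ≤ cm - 1/(n+1 : ℝ)}) = 0 := by
    intro n
    set A := Hε ∩ {ω | g ω ≤ cm - 1/(n+1 : ℝ)} with hA
    have hAF : MeasurableSet[F] A :=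
      hHεF.inter (hleF _ _ hgmeasF measurable_const)
    have hAm0 : MeasurableSet[m0] A := hF _ hAF
    have hsub : A ⊆ Hε := Set.inter_subset_left
    have hcond : ∫ ω in A, g ω ∂μ = ∫ ω in A, f (φ ω) ∂μ :=
      setIntegral_condExp hF hfφint hAF
    have hup : ∫ ω in A, g ω ∂μ ≤ (cm - 1/(n+1 : ℝ)) * (μ A).toReal := by
      have := setIntegral_mono_on (μ := μ) integrable_condExp.integrableOn
        (integrableOn_const (C := cm - 1/(n+1 : ℝ)) (measure_ne_top _ _)) hAm0
        (fun ω hω => hω.2 : ∀ ω ∈ A, g ω ≤ cm - 1/(n+1 : ℝ))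
      simpa [mul_comm, Measure.real] using this
    have hlow := hsetL A hAF hsub
    have hpos : (0:ℝ) < 1/(n+1 : ℝ) := by positivity
    have hμA : (μ A).toReal = 0 := by nlinarith [ENNReal.toReal_nonneg (a := μ A)]
    exact (ENNReal.toReal_eq_zero_iff _).mp hμA |>.resolve_right (measure_ne_top _ _)
  -- combine
  have hnull : μ {ω | ¬ (ω ∈ Hε → (cm ≤ g ω ∧ g ω ≤ cp))} = 0 := by
    have hsub : {ω | ¬ (ω ∈ Hε → (cm ≤ g ω ∧ g ω ≤ cp))}
        ⊆ (⋃ n : ℕ, Hε ∩ {ω | cp + 1/(n+1 : ℝ) ≤ g ω})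
          ∪ (⋃ n : ℕ, Hε ∩ {ω | g ω ≤ cm - 1/(n+1 : ℝ)}) := by
      intro ω hω
      simp only [Set.mem_setOf_eq, Classical.not_imp, not_and_or, not_le] at hω
      obtain ⟨hωH, hbad⟩ := hω
      rcases hbad with h | h
      · right
        obtain ⟨n, hn⟩ := exists_nat_one_div_lt (by linarith : (0:ℝ) < cm - g ω)
        exact Set.mem_iUnion.mpr ⟨n, hωH, by simp only [Set.mem_setOf_eq]; linarith⟩
      · left
        obtain ⟨n, hn⟩ := exists_nat_one_div_lt (by linarith : (0:ℝ) < g ω - cp)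
        exact Set.mem_iUnion.mpr ⟨n, hωH, by simp only [Set.mem_setOf_eq]; linarith⟩
    refine measure_mono_null hsub (measure_union_null ?_ ?_)
    · exact measure_iUnion_null fun n => hbadU n
    · exact measure_iUnion_null fun n => hbadL n
  rw [ae_iff]
  convert hnull using 3
end

section
/- Under the hypotheses of the conditional decoupling lemma (φ = ξ + ψ with ψ independent of F, ξ F-measurable, H_ε = {sup_{x∈K₂}|ξ_x| ≤ ε/2}), if f₂ : R^{Z^d} → [0,1] is increasing and supported on K₂ and f₁ : R^{Z^d} → [0,1] is any F-measurable function supported on K₁ ⊆ the F-measurable region, then E[f₁(φ) f₂(φ − ε)] − 2P[H_ε^c] ≤ E[f₁(φ) f₂(φ)] ≤ E[f₁(φ)] E[f₂(φ + ε)] + 2P[H_ε^c]. -/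
open MeasureTheory

lemma integrable01 {Ω : Type*} {mΩ : MeasurableSpace Ω} (μ : Measure Ω) [IsProbabilityMeasure μ]
    {g : Ω → ℝ} (hg : Measurable g) (h01 : ∀ ω, g ω ∈ Set.Icc (0:ℝ) 1) :
    Integrable g μ := by
  refine (integrable_const (1:ℝ)).mono' hg.aestronglyMeasurable (ae_of_all _ fun ω => ?_)
  rw [Real.norm_eq_abs, abs_le]
  exact ⟨by linarith [(h01 ω).1], (h01 ω).2⟩

lemma split_bound {Ω : Type*} {mΩ : MeasurableSpace Ω} (μ : Measure Ω) [IsProbabilityMeasure μ]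
    {H : Set Ω} (hH : MeasurableSet H) {g h : Ω → ℝ}
    (hg : Integrable g μ) (hh : Integrable h μ)
    (hg1 : ∀ ω, g ω ≤ 1) (hh0 : ∀ ω, 0 ≤ h ω)
    (hle : ∀ ω ∈ H, g ω ≤ h ω) :
    ∫ ω, g ω ∂μ ≤ (∫ ω, h ω ∂μ) + (μ Hᶜ).toReal := by
  have h1 : ∫ ω in H, g ω ∂μ ≤ ∫ ω in H, h ω ∂μ :=
    setIntegral_mono_on hg.integrableOn hh.integrableOn hH (fun ω hω => hle ω hω)
  have h2 : ∫ ω in H, h ω ∂μ ≤ ∫ ω, h ω ∂μ :=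
    setIntegral_le_integral hh (ae_of_all _ hh0)
  have h3 : ∫ ω in Hᶜ, g ω ∂μ ≤ (μ Hᶜ).toReal := by
    calc ∫ ω in Hᶜ, g ω ∂μ ≤ ∫ _ω in Hᶜ, (1:ℝ) ∂μ :=
          setIntegral_mono_on hg.integrableOn (integrable_const 1).integrableOn
            hH.compl (fun ω _ => hg1 ω)
      _ = (μ Hᶜ).toReal := by simp; rfl
  have h4 : ∫ ω, g ω ∂μ = ∫ ω in H, g ω ∂μ + ∫ ω in Hᶜ, g ω ∂μ :=
    (integral_add_compl hH hg).symm
  linarith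

/-- Decoupling inequality: under the hypotheses of the conditional decoupling lemma
(`φ = ξ + ψ` with `ψ` independent of `F`, `ξ` `F`-measurable,
`H_ε = {sup_{x∈K₂} |ξ_x| ≤ ε/2}`), if `f₂ : ℝ^{ℤ^d} → [0,1]` is increasing and supported
on `K₂` and `f₁ : ℝ^{ℤ^d} → [0,1]` is supported on `K₁` with `f₁(φ)` being
`F`-measurable, then
`E[f₁(φ) f₂(φ−ε)] − 2P[H_ε^c] ≤ E[f₁(φ) f₂(φ)] ≤ E[f₁(φ)] E[f₂(φ+ε)] + 2P[H_ε^c]`. -/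
theorem decoupling_inequality {Ω : Type*} (F : MeasurableSpace Ω) [m0 : MeasurableSpace Ω]
    (μ : Measure Ω) [IsProbabilityMeasure μ] {d : ℕ}
    (hF : F ≤ m0)
    (ξ ψ : Ω → (Fin d → ℤ) → ℝ)
    (hξmeas : Measurable[F] ξ) (hψmeas : Measurable ψ)
    (hindep : ∀ s : Set ((Fin d → ℤ) → ℝ), MeasurableSet s →
      ∀ t : Set Ω, MeasurableSet[F] t → μ (ψ ⁻¹' s ∩ t) = μ (ψ ⁻¹' s) * μ t)
    (K₁ K₂ : Set (Fin d → ℤ)) (hK : Disjoint K₁ K₂) (ε : ℝ) (hε : 0 < ε)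
    (φ : Ω → (Fin d → ℤ) → ℝ) (hφ : ∀ ω x, φ ω x = ξ ω x + ψ ω x)
    (f₁ f₂ : ((Fin d → ℤ) → ℝ) → ℝ)
    (hf₁meas : Measurable f₁) (hf₂meas : Measurable f₂)
    (hf₁01 : ∀ a, f₁ a ∈ Set.Icc (0 : ℝ) 1) (hf₂01 : ∀ a, f₂ a ∈ Set.Icc (0 : ℝ) 1)
    (hf₁supp : ∀ a b : (Fin d → ℤ) → ℝ, (∀ x ∈ K₁, a x = b x) → f₁ a = f₁ b)
    (hf₁F : Measurable[F] fun ω => f₁ (φ ω))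
    (hf₂mono : ∀ a b : (Fin d → ℤ) → ℝ, (∀ x, a x ≤ b x) → f₂ a ≤ f₂ b)
    (hf₂supp : ∀ a b : (Fin d → ℤ) → ℝ, (∀ x ∈ K₂, a x = b x) → f₂ a = f₂ b)
    (Hε : Set Ω) (hHε : Hε = {ω | ∀ x ∈ K₂, |ξ ω x| ≤ ε / 2}) :
    (∫ ω, f₁ (φ ω) * f₂ (fun x => φ ω x - ε) ∂μ) - 2 * (μ Hεᶜ).toReal
        ≤ ∫ ω, f₁ (φ ω) * f₂ (φ ω) ∂μ ∧
    (∫ ω, f₁ (φ ω) * f₂ (φ ω) ∂μ)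
        ≤ (∫ ω, f₁ (φ ω) ∂μ) * (∫ ω, f₂ (fun x => φ ω x + ε) ∂μ)
          + 2 * (μ Hεᶜ).toReal := by
  letI _inst2 : MeasurableSpace Ω := m0
  -- basic measurability
  have hξm : Measurable[m0] ξ := hξmeas.mono hF le_rfl
  have hψm : Measurable[m0] ψ := hψmeas
  have hφmeas : Measurable[m0] φ := by
    have : φ = fun ω x => ξ ω x + ψ ω x := funext fun ω => funext fun x => hφ ω x
    rw [this]
    exact measurable_pi_iff.2 fun x =>
      ((measurable_pi_apply x).comp hξm).add ((measurable_pi_apply x).comp hψm)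
  -- f₂ is monotone with respect to the K₂-coordinates only
  have hf₂monoK : ∀ a b : (Fin d → ℤ) → ℝ, (∀ x ∈ K₂, a x ≤ b x) → f₂ a ≤ f₂ b := by
    classical
    intro a b hab
    have h1 : f₂ a = f₂ (fun x => if x ∈ K₂ then a x else b x) :=
      hf₂supp _ _ (fun x hx => by simp [hx])
    rw [h1]
    refine hf₂mono _ _ fun x => ?_
    by_cases hx : x ∈ K₂
    · simpa [hx] using hab x hx
    · simp [hx]
  -- measurability of Hε
  have hHεmeas : MeasurableSet[m0] Hε := by
    rw [hHε]
    have : {ω | ∀ x ∈ K₂, |ξ ω x| ≤ ε / 2} = ⋂ x ∈ K₂, {ω | |ξ ω x| ≤ ε / 2} := by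
      ext ω; simp
    rw [this]
    exact MeasurableSet.biInter (Set.to_countable K₂) fun x _ =>
      measurableSet_le ((measurable_pi_apply x).comp hξm).abs measurable_const
  -- the functions involved
  set X : Ω → ℝ := fun ω => f₁ (φ ω) with hX
  set A : Ω → ℝ := fun ω => f₂ (φ ω) with hA
  set B : Ω → ℝ := fun ω => f₂ (fun x => ψ ω x + ε / 2) with hB
  set C : Ω → ℝ := fun ω => f₂ (fun x => φ ω x + ε) with hC
  set D : Ω → ℝ := fun ω => f₂ (fun x => φ ω x - ε) with hD
  have hXmeas : Measurable[m0] X := hf₁meas.comp hφmeas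
  have hAmeas : Measurable[m0] A := hf₂meas.comp hφmeas
  have hBmeas : Measurable[m0] B := hf₂meas.comp <| measurable_pi_iff.2 fun x =>
    ((measurable_pi_apply x).comp hψm).add measurable_const
  have hCmeas : Measurable[m0] C := hf₂meas.comp <| measurable_pi_iff.2 fun x =>
    ((measurable_pi_apply x).comp hφmeas).add measurable_const
  have hDmeas : Measurable[m0] D := hf₂meas.comp <| measurable_pi_iff.2 fun x =>
    ((measurable_pi_apply x).comp hφmeas).add measurable_const
  have hXint : Integrable X μ := integrable01 μ hXmeas fun ω => hf₁01 _
  have hAint : Integrable A μ := integrable01 μ hAmeas fun ω => hf₂01 _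
  have hBint : Integrable B μ := integrable01 μ hBmeas fun ω => hf₂01 _
  have hCint : Integrable C μ := integrable01 μ hCmeas fun ω => hf₂01 _
  have hDint : Integrable D μ := integrable01 μ hDmeas fun ω => hf₂01 _
  have hXAint : Integrable (fun ω => X ω * A ω) μ :=
    integrable01 μ (hXmeas.mul hAmeas) fun ω =>
      ⟨mul_nonneg (hf₁01 _).1 (hf₂01 _).1, mul_le_one₀ (hf₁01 _).2 (hf₂01 _).1 (hf₂01 _).2⟩
  have hXBint : Integrable (fun ω => X ω * B ω) μ :=
    integrable01 μ (hXmeas.mul hBmeas) fun ω =>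
      ⟨mul_nonneg (hf₁01 _).1 (hf₂01 _).1, mul_le_one₀ (hf₁01 _).2 (hf₂01 _).1 (hf₂01 _).2⟩
  have hXDint : Integrable (fun ω => X ω * D ω) μ :=
    integrable01 μ (hXmeas.mul hDmeas) fun ω =>
      ⟨mul_nonneg (hf₁01 _).1 (hf₂01 _).1, mul_le_one₀ (hf₁01 _).2 (hf₂01 _).1 (hf₂01 _).2⟩
  have hμc : 0 ≤ (μ Hεᶜ).toReal := ENNReal.toReal_nonneg
  constructor
  · -- lower bound: trivial since f₂(φ - ε) ≤ f₂(φ) pointwise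
    have h1 : ∫ ω, X ω * D ω ∂μ ≤ ∫ ω, X ω * A ω ∂μ := by
      refine integral_mono hXDint hXAint fun ω => ?_
      exact mul_le_mul_of_nonneg_left
        (hf₂mono _ _ fun x => by linarith [hε]) (hf₁01 _).1
    linarith
  · -- upper bound
    -- Step 1: on Hε, A ≤ B
    have step1 : ∫ ω, X ω * A ω ∂μ ≤ (∫ ω, X ω * B ω ∂μ) + (μ Hεᶜ).toReal := by
      refine split_bound μ hHεmeas hXAint hXBint
        (fun ω => mul_le_one₀ (hf₁01 _).2 (hf₂01 _).1 (hf₂01 _).2)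
        (fun ω => mul_nonneg (hf₁01 _).1 (hf₂01 _).1)
        (fun ω hω => ?_)
      rw [hHε] at hω
      refine mul_le_mul_of_nonneg_left (hf₂monoK _ _ fun x hx => ?_) (hf₁01 _).1
      have := hω x hx
      have := abs_le.1 this
      rw [hφ]
      linarith [this.2]
    -- Step 2: independence
    have hBF : Measurable[MeasurableSpace.comap ψ inferInstance] B := by
      intro s hs
      exact ⟨(fun a => f₂ (fun x => a x + ε / 2)) ⁻¹' s,
        (hf₂meas.comp (measurable_pi_iff.2 fun x =>
          (measurable_pi_apply x).add measurable_const)) hs, rfl⟩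
    have hindepF : ProbabilityTheory.IndepFun B X μ := by
      rw [ProbabilityTheory.indepFun_iff_measure_inter_preimage_eq_mul]
      intro s t hs ht
      obtain ⟨s', hs', hseq⟩ := hBF hs
      have hXt : MeasurableSet[F] (X ⁻¹' t) := hf₁F ht
      calc μ (B ⁻¹' s ∩ X ⁻¹' t) = μ (ψ ⁻¹' s' ∩ X ⁻¹' t) := by rw [← hseq]
        _ = μ (ψ ⁻¹' s') * μ (X ⁻¹' t) := hindep s' hs' _ hXt
        _ = μ (B ⁻¹' s) * μ (X ⁻¹' t) := by rw [← hseq]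
    have step2 : ∫ ω, X ω * B ω ∂μ = (∫ ω, X ω ∂μ) * ∫ ω, B ω ∂μ := by
      have := hindepF.integral_mul_eq_mul_integral hBint.aestronglyMeasurable hXint.aestronglyMeasurable
      calc ∫ ω, X ω * B ω ∂μ = ∫ ω, B ω * X ω ∂μ := by
            congr 1; funext ω; ring
        _ = (∫ ω, B ω ∂μ) * ∫ ω, X ω ∂μ := this
        _ = (∫ ω, X ω ∂μ) * ∫ ω, B ω ∂μ := by ring
    -- Step 3: on Hε, B ≤ C
    have step3 : ∫ ω, B ω ∂μ ≤ (∫ ω, C ω ∂μ) + (μ Hεᶜ).toReal := by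
      refine split_bound μ hHεmeas hBint hCint (fun ω => (hf₂01 _).2)
        (fun ω => (hf₂01 _).1) (fun ω hω => ?_)
      rw [hHε] at hω
      refine hf₂monoK _ _ fun x hx => ?_
      have := abs_le.1 (hω x hx)
      rw [hφ]
      linarith [this.1]
    -- combine
    have hX0 : 0 ≤ ∫ ω, X ω ∂μ := integral_nonneg fun ω => (hf₁01 _).1
    have hX1 : ∫ ω, X ω ∂μ ≤ 1 := by
      calc ∫ ω, X ω ∂μ ≤ ∫ _ω, (1:ℝ) ∂μ :=
            integral_mono hXint (integrable_const 1) fun ω => (hf₁01 _).2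
        _ = 1 := by simp
    have step4 : (∫ ω, X ω ∂μ) * ∫ ω, B ω ∂μ
        ≤ (∫ ω, X ω ∂μ) * ∫ ω, C ω ∂μ + (μ Hεᶜ).toReal := by
      calc (∫ ω, X ω ∂μ) * ∫ ω, B ω ∂μ
          ≤ (∫ ω, X ω ∂μ) * ((∫ ω, C ω ∂μ) + (μ Hεᶜ).toReal) :=
            mul_le_mul_of_nonneg_left step3 hX0
        _ = (∫ ω, X ω ∂μ) * (∫ ω, C ω ∂μ) + (∫ ω, X ω ∂μ) * (μ Hεᶜ).toReal := by ring
        _ ≤ (∫ ω, X ω ∂μ) * (∫ ω, C ω ∂μ) + (μ Hεᶜ).toReal := by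
            nlinarith
    calc ∫ ω, X ω * A ω ∂μ ≤ (∫ ω, X ω * B ω ∂μ) + (μ Hεᶜ).toReal := step1
      _ = (∫ ω, X ω ∂μ) * (∫ ω, B ω ∂μ) + (μ Hεᶜ).toReal := by rw [step2]
      _ ≤ ((∫ ω, X ω ∂μ) * (∫ ω, C ω ∂μ) + (μ Hεᶜ).toReal) + (μ Hεᶜ).toReal := by
            linarith
      _ = (∫ ω, X ω ∂μ) * (∫ ω, C ω ∂μ) + 2 * (μ Hεᶜ).toReal := by ring
end
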